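/- Let K ≥ 1, T ≥ 0, λ ∈ ℝ. For S = (s_0,…,s_T) ∈ {1,…,K}^{T+1} define L(S) = λ · #{t ∈ {1,…,T} : s_t ≠ s_{t−1}}. Define p(S) := e^{−L(S)} / Σ_{S' ∈ {1,…,K}^{T+1}} e^{−L(S')}. Then p(S) = (1/K) · Π_{t=1}^T q(s_t, s_{t−1}), where q(i,j) = e^{−λ}/(1 + (K−1)e^{−λ}) if i ≠ j and q(i,j) = 1/(1 + (K−1)e^{−λ}) if i = j; i.e., the normalized sequence distribution is the Markov-chain distribution with uniform initial law p(s_0) = 1/K and the stated transition probabilities. -/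

import Mathlib

/-!
Both sides are products of pairwise factors along the path. Writing `E = e^{-λ}`, the Gibbs
weight `e^{-L(S)}` is `∏ₜ w(sₜ, sₜ₋₁)` with `w(i, j) = 1` if `i = j` and `E` otherwise, and every
row of `w` sums to `D = 1 + (K - 1)E`. Summing such a path product over the first state and
peeling off one factor at a time gives the partition function `K · D^T`, so dividing the weight
by it is the same as using the uniform initial law `1/K` and the transition kernel `q = w / D`.
-/

open Finset

section PathWeight

variable {α R : Type*}

def pathWeight [CommMonoid R] {n : ℕ} (f : α → α → R) (S : Fin (n + 1) → α) : R :=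
  ∏ t : Fin n, f (S t.succ) (S t.castSucc)

lemma pathWeight_cons [CommMonoid R] {n : ℕ} (f : α → α → R) (x : α) (S : Fin (n + 1) → α) :
    pathWeight f (Fin.cons x S : Fin (n + 2) → α) = f (S 0) x * pathWeight f S := by
  simp only [pathWeight, Fin.prod_univ_succ, Fin.cons_succ, Fin.castSucc_zero, Fin.cons_zero,
    ← Fin.succ_castSucc]

lemma sum_pathWeight [Fintype α] [CommSemiring R] (f : α → α → R) (D : R)
    (hf : ∀ i, ∑ j, f i j = D) (n : ℕ) : ∑ S : Fin (n + 1) → α, pathWeight f S = Fintype.card α * D ^ n := by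
  induction n with
  | zero => simp [pathWeight]
  | succ n ih =>
    rw [← (Fin.consEquiv fun _ => α).sum_comp, Fintype.sum_prod_type, sum_comm]
    simp only [Fin.consEquiv, Equiv.coe_fn_mk, pathWeight_cons, ← sum_mul, hf, ← mul_sum, ih]
    ring

lemma pathWeight_div [Field R] {n : ℕ} (f : α → α → R) (D : R) (S : Fin (n + 1) → α) :
    pathWeight (fun i j => f i j / D) S = pathWeight f S / D ^ n := by
  simp [pathWeight, prod_div_distrib]

lemma pathWeight_div_sum_pathWeight [Fintype α] [Field R] (f : α → α → R) (D : R)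
    (hf : ∀ i, ∑ j, f i j = D) {n : ℕ} (S : Fin (n + 1) → α) :
    pathWeight f S / ∑ S' : Fin (n + 1) → α, pathWeight f S'
      = 1 / Fintype.card α * pathWeight (fun i j => f i j / D) S := by
  rw [sum_pathWeight f D hf, pathWeight_div]
  ring

end PathWeight

section SwitchWeight

variable {α R : Type*} [DecidableEq α]

def switchWeight [One R] (E : R) (i j : α) : R :=
  if i = j then 1 else E

lemma pathWeight_switchWeight [CommMonoid R] {n : ℕ} (E : R) (S : Fin (n + 1) → α) :
    pathWeight (switchWeight E) S = E ^ #{t : Fin n | S t.succ ≠ S t.castSucc} := by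
  rw [pathWeight, ← prod_const, prod_filter]
  refine prod_congr rfl fun t _ => ?_
  by_cases h : S t.succ = S t.castSucc <;> simp [switchWeight, h]

lemma sum_switchWeight [Fintype α] [CommRing R] (E : R) (i : α) :
    ∑ j, switchWeight E i j = 1 + ((Fintype.card α : R) - 1) * E := by
  have : Nonempty α := ⟨i⟩
  simp [switchWeight, sum_ite, filter_ne, filter_eq, Nat.cast_pred Fintype.card_pos]

end SwitchWeight

theorem switching_loss_gives_markov_chain_general
    (K T : ℕ) (lam : ℝ)
    (L : (Fin (T + 1) → Fin K) → ℝ)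
    (hL : ∀ S : Fin (T + 1) → Fin K,
      L S = lam * ((Finset.univ.filter fun t : Fin T => S t.succ ≠ S t.castSucc).card : ℝ))
    (q : Fin K → Fin K → ℝ)
    (hq : ∀ i j, q i j = if i = j then 1 / (1 + ((K : ℝ) - 1) * Real.exp (-lam))
        else Real.exp (-lam) / (1 + ((K : ℝ) - 1) * Real.exp (-lam)))
    (S : Fin (T + 1) → Fin K) :
    Real.exp (-L S) / (∑ S' : Fin (T + 1) → Fin K, Real.exp (-L S'))
      = (1 / (K : ℝ)) * ∏ t : Fin T, q (S t.succ) (S t.castSucc) := by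
  set E := Real.exp (-lam)
  have hexp (S' : Fin (T + 1) → Fin K) : Real.exp (-L S') = pathWeight (switchWeight E) S' := by
    rw [hL, pathWeight_switchWeight, ← neg_mul, mul_comm, Real.exp_nat_mul]
  have hrow (i : Fin K) : ∑ j, switchWeight E i j = 1 + ((K : ℝ) - 1) * E := by
    rw [sum_switchWeight, Fintype.card_fin]
  have hq_switch : q = fun i j => switchWeight E i j / (1 + ((K : ℝ) - 1) * E) := by
    ext i j
    by_cases h : i = j <;> simp [hq, switchWeight, h, E]
  simp only [hexp]
  rw [pathWeight_div_sum_pathWeight _ _ hrow, Fintype.card_fin, ← hq_switch, pathWeight]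

/-- Statement 4 of the Corollary in "Fitting Jump Models": with mode-sequence loss
`L(S) = λ·#{t : sₜ ≠ sₜ₋₁}`, the normalized sequence distribution is the Markov-chain
distribution with uniform initial law `1/K` and transition probabilities
`e^{-λ}/(1+(K−1)e^{-λ})` off-diagonal and `1/(1+(K−1)e^{-λ})` on the diagonal. -/
theorem switching_loss_gives_markov_chain
    (K T : ℕ) (hK : 1 ≤ K) (lam : ℝ)
    (L : (Fin (T + 1) → Fin K) → ℝ)
    (hL : ∀ S : Fin (T + 1) → Fin K,
      L S = lam * ((Finset.univ.filter fun t : Fin T => S t.succ ≠ S t.castSucc).card : ℝ))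
    (q : Fin K → Fin K → ℝ)
    (hq : ∀ i j, q i j = if i = j then 1 / (1 + ((K : ℝ) - 1) * Real.exp (-lam))
        else Real.exp (-lam) / (1 + ((K : ℝ) - 1) * Real.exp (-lam)))
    (S : Fin (T + 1) → Fin K) :
    Real.exp (-L S) / (∑ S' : Fin (T + 1) → Fin K, Real.exp (-L S'))
      = (1 / (K : ℝ)) * ∏ t : Fin T, q (S t.succ) (S t.castSucc) :=
  switching_loss_gives_markov_chain_general K T lam L hL q hq S
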